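/- arXiv:0907.2545 — 2 statements merged into one kernel-verified Lean document; each statement's English description precedes it below -/
import Mathlib

section
/- Let P(z) = Σ_{j=0}^m z^j A_j be a matrix polynomial with coefficients A_j ∈ ℂ^{n×n} such that every coefficient satisfies A_j^H = A_j or A_j^H = −A_j. Let λ ∈ ℂ and x ∈ ℂⁿ with x^H x = 1, and set r := −P(λ)x, Λ_m := (1, λ, …, λ^m)ᵀ ∈ ℂ^{m+1}, and P_x := I − x x^H. For each j define ΔA_j := −x x^H A_j x x^H + (1/‖Λ_m‖₂²)·(λ^j x r^H P_x + conj(λ^j) P_x r x^H) if A_j^H = A_j, and ΔA_j := −x x^H A_j x x^H − (1/‖Λ_m‖₂²)·(λ^j x r^H P_x − conj(λ^j) P_x r x^H) if A_j^H = −A_j. Then the polynomial ΔP(z) := Σ_{j=0}^m z^j ΔA_j satisfies P(λ)x + ΔP(λ)x = 0, and moreover ΔA_j^H = ΔA_j whenever A_j^H = A_j and ΔA_j^H = −ΔA_j whenever A_j^H = −A_j (so if P is Hermitian, skew-Hermitian, H-even or H-odd, then ΔP has the same structure). -/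
/-!
Because `x^H x = 1` and `P_x x = 0`, the correction term of `ΔA_j` sends `x` to
`conj(λ^j) / ‖Λ_m‖₂² · P_x r` in both cases; the weights `λ^j conj(λ^j) / ‖Λ_m‖₂²` sum to 1, so
`ΔP(λ) x = -(x^H P(λ) x) x + P_x r = (x^H r) x + (r - (x^H r) x) = r`.
The correction is `D_j + D_j^H` or `D_j - D_j^H` with `D_j = λ^j x r^H P_x`, and `x^H A_j x`
is real or purely imaginary with `A_j`, so each `ΔA_j` inherits the structure of `A_j`.
-/

open scoped ComplexConjugate
open Matrix

noncomputable section

variable {ι : Type*} [Fintype ι] [DecidableEq ι]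

/-- Evaluation of the matrix polynomial with coefficient list `A` at the point `z`. -/
def polyEval {m : ℕ} (A : Fin (m+1) → Matrix ι ι ℂ) (z : ℂ) : Matrix ι ι ℂ :=
  ∑ j : Fin (m+1), z ^ (j : ℕ) • A j

/-- Squared Euclidean norm of a complex vector. -/
def vecNormSq (x : ι → ℂ) : ℝ := ∑ i, ‖x i‖ ^ 2

/-- Euclidean norm of a complex vector. -/
def vecNorm (x : ι → ℂ) : ℝ := Real.sqrt (vecNormSq x)

/-- `‖(1, z, …, z^m)‖₂²`. -/
def lamNormSq (m : ℕ) (z : ℂ) : ℝ := ∑ j : Fin (m+1), ‖z ^ (j : ℕ)‖ ^ 2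

/-- Squared Frobenius norm of a matrix. -/
def frobNormSq (M : Matrix ι ι ℂ) : ℝ := ∑ i, ∑ k, ‖M i k‖ ^ 2

/-- Spectral (operator 2-) norm of a matrix. -/
def specNorm (M : Matrix ι ι ℂ) : ℝ := ‖Matrix.toEuclideanCLM (𝕜 := ℂ) M‖

/-- Frobenius norm of a matrix polynomial: `(Σ_j ‖A_j‖_F²)^{1/2}`. -/
def polyNormF {m : ℕ} (A : Fin (m+1) → Matrix ι ι ℂ) : ℝ :=
  Real.sqrt (∑ j, frobNormSq (A j))

/-- Spectral norm of a matrix polynomial: `(Σ_j ‖A_j‖₂²)^{1/2}`. -/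
def polyNorm2 {m : ℕ} (A : Fin (m+1) → Matrix ι ι ℂ) : ℝ :=
  Real.sqrt (∑ j, specNorm (A j) ^ 2)

/-- Structured backward error of `(lam, x)` as an approximate eigenpair of the matrix
polynomial `A`, with respect to the polynomial norm `N` and the structure class `S`. -/
def eta {m : ℕ} (N : (Fin (m+1) → Matrix ι ι ℂ) → ℝ)
    (S : Set (Fin (m+1) → Matrix ι ι ℂ)) (lam : ℂ) (x : ι → ℂ)
    (A : Fin (m+1) → Matrix ι ι ℂ) : ℝ :=
  sInf {t | ∃ ΔA ∈ S, (polyEval A lam + polyEval ΔA lam) *ᵥ x = 0 ∧ t = N ΔA}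

/-- A matrix polynomial is regular if `det P(z) ≠ 0` for some `z`. -/
def Regular {m : ℕ} (A : Fin (m+1) → Matrix ι ι ℂ) : Prop :=
  ∃ z : ℂ, (polyEval A z).det ≠ 0

end

lemma one_le_lamNormSq (m : ℕ) (z : ℂ) : 1 ≤ lamNormSq m z := by
  have h0 := Finset.single_le_sum (fun (j : Fin (m+1)) _ => sq_nonneg ‖z ^ (j : ℕ)‖)
    (Finset.mem_univ 0)
  simpa [lamNormSq] using h0

lemma sum_pow_mul_inv_lamNormSq_mul_conj_pow (m : ℕ) (z : ℂ) :
    ∑ j : Fin (m+1), z ^ (j : ℕ) * ((lamNormSq m z : ℂ)⁻¹ * conj (z ^ (j : ℕ))) = 1 := by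
  have hsum : ∑ j : Fin (m+1), z ^ (j : ℕ) * conj (z ^ (j : ℕ)) = lamNormSq m z := by
    simp only [Complex.mul_conj', lamNormSq]
    push_cast
    rfl
  have hpos : (0 : ℝ) < lamNormSq m z := one_pos.trans_le (one_le_lamNormSq m z)
  simp only [mul_left_comm _ (lamNormSq m z : ℂ)⁻¹, ← Finset.mul_sum, hsum]
  exact inv_mul_cancel₀ (Complex.ofReal_ne_zero.mpr hpos.ne')

section

variable {ι : Type*}

lemma isHermitian_one_sub_vecMulVec_star [DecidableEq ι] (x : ι → ℂ) :
    (1 - vecMulVec x (star x)).IsHermitian := by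
  rw [IsHermitian, conjTranspose_sub, conjTranspose_one, conjTranspose_vecMulVec, star_star]

variable [Fintype ι]

lemma vecMulVec_star_mulVec (x y : ι → ℂ) : vecMulVec y (star x) *ᵥ x = (star x ⬝ᵥ x) • y := by
  rw [vecMulVec_mulVec, op_smul_eq_smul]

lemma one_sub_vecMulVec_star_mulVec [DecidableEq ι] (x y : ι → ℂ) :
    (1 - vecMulVec x (star x)) *ᵥ y = y - (star x ⬝ᵥ y) • x := by
  rw [sub_mulVec, one_mulVec, vecMulVec_mulVec, op_smul_eq_smul]

lemma neg_smul_vecMulVec_add_mulVec {P : Matrix ι ι ℂ} {x : ι → ℂ} (hx : star x ⬝ᵥ x = 1)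
    (hPx : P *ᵥ x = 0) (r : ι → ℂ) (q c μ ν : ℂ) :
    (-q • vecMulVec x (star x) +
      c • (μ • (vecMulVec x (star r) * P) + ν • (P * vecMulVec r (star x)))) *ᵥ x =
    -q • x + (c * ν) • (P *ᵥ r) := by
  simp only [add_mulVec, smul_mulVec, ← mulVec_mulVec, hPx, mulVec_zero, vecMulVec_star_mulVec, hx,
    one_smul, smul_zero, zero_add, smul_smul]

lemma neg_smul_vecMulVec_sub_mulVec {P : Matrix ι ι ℂ} {x : ι → ℂ} (hx : star x ⬝ᵥ x = 1)
    (hPx : P *ᵥ x = 0) (r : ι → ℂ) (q c μ ν : ℂ) :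
    (-q • vecMulVec x (star x) -
      c • (μ • (vecMulVec x (star r) * P) - ν • (P * vecMulVec r (star x)))) *ᵥ x =
    -q • x + (c * ν) • (P *ᵥ r) := by
  simp only [sub_mulVec, smul_mulVec, ← mulVec_mulVec, hPx, mulVec_zero, vecMulVec_star_mulVec, hx,
    one_smul, smul_zero, zero_sub, smul_neg, sub_neg_eq_add, smul_smul]

lemma polyEval_mulVec {m : ℕ} (A : Fin (m+1) → Matrix ι ι ℂ) (z : ℂ) (x : ι → ℂ) :
    polyEval A z *ᵥ x = ∑ j : Fin (m+1), z ^ (j : ℕ) • (A j *ᵥ x) := by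
  simp only [polyEval, sum_mulVec, smul_mulVec]

lemma polyEval_mulVec_eq_of_forall_mulVec {m : ℕ} {A ΔA : Fin (m+1) → Matrix ι ι ℂ} {lam : ℂ}
    {x r : ι → ℂ} {P : Matrix ι ι ℂ} {w : Fin (m+1) → ℂ} (hr : r = -(polyEval A lam *ᵥ x))
    (hPr : P *ᵥ r = r - (star x ⬝ᵥ r) • x) (hw : ∑ j : Fin (m+1), lam ^ (j : ℕ) * w j = 1)
    (hΔ : ∀ j : Fin (m+1), ΔA j *ᵥ x = -(star x ⬝ᵥ (A j *ᵥ x)) • x + w j • (P *ᵥ r)) :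
    polyEval ΔA lam *ᵥ x = r := by
  have hq : ∑ j : Fin (m+1), lam ^ (j : ℕ) * (star x ⬝ᵥ (A j *ᵥ x)) = -(star x ⬝ᵥ r) := by
    simp only [hr, polyEval_mulVec, dotProduct_neg, dotProduct_sum, dotProduct_smul, smul_eq_mul,
      neg_neg]
  calc polyEval ΔA lam *ᵥ x
      = -(∑ j : Fin (m+1), lam ^ (j : ℕ) * (star x ⬝ᵥ (A j *ᵥ x))) • x +
          (∑ j : Fin (m+1), lam ^ (j : ℕ) * w j) • (P *ᵥ r) := by
        simp only [polyEval_mulVec, hΔ, smul_add, smul_smul, Finset.sum_add_distrib,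
          ← Finset.sum_smul, mul_neg, Finset.sum_neg_distrib]
    _ = r := by rw [hq, hw, hPr]; module

lemma star_dotProduct_mulVec_self (M : Matrix ι ι ℂ) (x : ι → ℂ) :
    star (star x ⬝ᵥ (M *ᵥ x)) = star x ⬝ᵥ (Mᴴ *ᵥ x) := by
  rw [star_dotProduct x (Mᴴ *ᵥ x), star_mulVec, conjTranspose_conjTranspose, ← dotProduct_mulVec]

lemma conjTranspose_smul_vecMulVec_mul {P : Matrix ι ι ℂ} (hP : P.IsHermitian) (μ : ℂ)
    (x r : ι → ℂ) :
    (μ • (vecMulVec x (star r) * P))ᴴ = conj μ • (P * vecMulVec r (star x)) := by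
  rw [conjTranspose_smul, conjTranspose_mul, conjTranspose_vecMulVec, star_star, hP.eq]
  rfl

lemma isHermitian_neg_smul_vecMulVec_add {M P : Matrix ι ι ℂ} (hM : M.IsHermitian)
    (hP : P.IsHermitian) (x r : ι → ℂ) (s : ℝ) (μ : ℂ) :
    (-(star x ⬝ᵥ (M *ᵥ x)) • vecMulVec x (star x) + (s : ℂ)⁻¹ •
      (μ • (vecMulVec x (star r) * P) + conj μ • (P * vecMulVec r (star x)))).IsHermitian := by
  have hq : IsSelfAdjoint (star x ⬝ᵥ (M *ᵥ x)) := by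
    rw [isSelfAdjoint_iff, star_dotProduct_mulVec_self, hM.eq]
  have hs : IsSelfAdjoint (s : ℂ)⁻¹ := by
    rw [isSelfAdjoint_iff, ← Complex.ofReal_inv, Complex.star_def, Complex.conj_ofReal]
  have hX : (vecMulVec x (star x)).IsHermitian := by
    rw [IsHermitian, conjTranspose_vecMulVec, star_star]
  rw [← conjTranspose_smul_vecMulVec_mul hP]
  exact (hX.smul hq.neg).add ((isHermitian_add_transpose_self _).smul hs)

lemma conjTranspose_neg_smul_vecMulVec_sub {M P : Matrix ι ι ℂ} (hM : Mᴴ = -M)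
    (hP : P.IsHermitian) (x r : ι → ℂ) (s : ℝ) (μ : ℂ) :
    (-(star x ⬝ᵥ (M *ᵥ x)) • vecMulVec x (star x) - (s : ℂ)⁻¹ •
      (μ • (vecMulVec x (star r) * P) - conj μ • (P * vecMulVec r (star x))))ᴴ =
    -(-(star x ⬝ᵥ (M *ᵥ x)) • vecMulVec x (star x) - (s : ℂ)⁻¹ •
      (μ • (vecMulVec x (star r) * P) - conj μ • (P * vecMulVec r (star x)))) := by
  have hq : star (star x ⬝ᵥ (M *ᵥ x)) = -(star x ⬝ᵥ (M *ᵥ x)) := by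
    rw [star_dotProduct_mulVec_self, hM, neg_mulVec, dotProduct_neg]
  have hs : star (s : ℂ)⁻¹ = (s : ℂ)⁻¹ := by
    rw [← Complex.ofReal_inv, Complex.star_def, Complex.conj_ofReal]
  rw [← conjTranspose_smul_vecMulVec_mul hP]
  simp only [conjTranspose_sub, conjTranspose_smul, conjTranspose_conjTranspose, star_neg, hq, hs,
    conjTranspose_vecMulVec, star_star]
  module

end

theorem structured_perturbation_exists_conjTranspose_general {n m : ℕ}
    (A ΔA : Fin (m+1) → Matrix (Fin n) (Fin n) ℂ)
    (lam : ℂ) (x : Fin n → ℂ) (hx : star x ⬝ᵥ x = 1)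
    (r : Fin n → ℂ) (hr : r = -(polyEval A lam *ᵥ x))
    (Px : Matrix (Fin n) (Fin n) ℂ) (hPx : Px = 1 - vecMulVec x (star x))
    (hΔ : ∀ j : Fin (m+1),
      ((A j)ᴴ = A j ∧
        ΔA j = -(star x ⬝ᵥ (A j *ᵥ x)) • vecMulVec x (star x) +
          ((lamNormSq m lam : ℂ))⁻¹ •
            (lam ^ (j : ℕ) • (vecMulVec x (star r) * Px)
              + conj (lam ^ (j : ℕ)) • (Px * vecMulVec r (star x)))) ∨
      ((A j)ᴴ = -(A j) ∧
        ΔA j = -(star x ⬝ᵥ (A j *ᵥ x)) • vecMulVec x (star x) -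
          ((lamNormSq m lam : ℂ))⁻¹ •
            (lam ^ (j : ℕ) • (vecMulVec x (star r) * Px)
              - conj (lam ^ (j : ℕ)) • (Px * vecMulVec r (star x))))) :
    (polyEval A lam + polyEval ΔA lam) *ᵥ x = 0 ∧
    (∀ j : Fin (m+1),
      ((A j)ᴴ = A j ∧ (ΔA j)ᴴ = ΔA j) ∨ ((A j)ᴴ = -(A j) ∧ (ΔA j)ᴴ = -(ΔA j))) := by
  have hPx_herm : Px.IsHermitian := hPx ▸ isHermitian_one_sub_vecMulVec_star x
  have hPx_x : Px *ᵥ x = 0 := by rw [hPx, one_sub_vecMulVec_star_mulVec, hx, one_smul, sub_self]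
  have hPx_r : Px *ᵥ r = r - (star x ⬝ᵥ r) • x := hPx ▸ one_sub_vecMulVec_star_mulVec x r
  refine ⟨?_, fun j => ?_⟩
  · have hΔx : ∀ j : Fin (m+1), ΔA j *ᵥ x = -(star x ⬝ᵥ (A j *ᵥ x)) • x +
        ((lamNormSq m lam : ℂ)⁻¹ * conj (lam ^ (j : ℕ))) • (Px *ᵥ r) := fun j => by
      rcases hΔ j with ⟨-, hΔj⟩ | ⟨-, hΔj⟩
      · rw [hΔj, neg_smul_vecMulVec_add_mulVec hx hPx_x]
      · rw [hΔj, neg_smul_vecMulVec_sub_mulVec hx hPx_x]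
    rw [add_mulVec, polyEval_mulVec_eq_of_forall_mulVec hr hPx_r
      (sum_pow_mul_inv_lamNormSq_mul_conj_pow m lam) hΔx, hr, add_neg_cancel]
  · rcases hΔ j with ⟨hA, hΔj⟩ | ⟨hA, hΔj⟩
    · exact .inl ⟨hA, hΔj ▸ isHermitian_neg_smul_vecMulVec_add hA hPx_herm x r _ _⟩
    · exact .inr ⟨hA, hΔj ▸ conjTranspose_neg_smul_vecMulVec_sub hA hPx_herm x r _ _⟩

/-- Existence of a structure-preserving perturbation (conjugate-transpose
structures): the explicitly constructed `ΔP` satisfies `P(λ)x + ΔP(λ)x = 0` and each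
coefficient `ΔA_j` is Hermitian when `A_j` is (first case of the construction) and
skew-Hermitian when `A_j` is (second case of the construction). -/
theorem structured_perturbation_exists_conjTranspose {n m : ℕ}
    (A ΔA : Fin (m+1) → Matrix (Fin n) (Fin n) ℂ)
    (lam : ℂ) (x : Fin n → ℂ) (hx : star x ⬝ᵥ x = 1)
    (r : Fin n → ℂ) (hr : r = -(polyEval A lam *ᵥ x))
    (Px : Matrix (Fin n) (Fin n) ℂ) (hPx : Px = 1 - vecMulVec x (star x))
    (hstruct : ∀ j : Fin (m+1), (A j)ᴴ = A j ∨ (A j)ᴴ = -(A j))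
    (hΔ : ∀ j : Fin (m+1),
      ((A j)ᴴ = A j ∧
        ΔA j = -(star x ⬝ᵥ (A j *ᵥ x)) • vecMulVec x (star x) +
          ((lamNormSq m lam : ℂ))⁻¹ •
            (lam ^ (j : ℕ) • (vecMulVec x (star r) * Px)
              + conj (lam ^ (j : ℕ)) • (Px * vecMulVec r (star x)))) ∨
      ((A j)ᴴ = -(A j) ∧
        ΔA j = -(star x ⬝ᵥ (A j *ᵥ x)) • vecMulVec x (star x) -
          ((lamNormSq m lam : ℂ))⁻¹ •
            (lam ^ (j : ℕ) • (vecMulVec x (star r) * Px)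
              - conj (lam ^ (j : ℕ)) • (Px * vecMulVec r (star x))))) :
    (polyEval A lam + polyEval ΔA lam) *ᵥ x = 0 ∧
    (∀ j : Fin (m+1),
      ((A j)ᴴ = A j ∧ (ΔA j)ᴴ = ΔA j) ∨ ((A j)ᴴ = -(A j) ∧ (ΔA j)ᴴ = -(ΔA j))) :=
  structured_perturbation_exists_conjTranspose_general A ΔA lam x hx r hr Px hPx hΔ
end

section
/- Let S be the set of symmetric matrix polynomials in P_m(ℂ^{n×n}) and let P ∈ S be regular. Let λ ∈ ℂ and x ∈ ℂⁿ with x^H x = 1, and set r := −P(λ)x and Λ_m := (1, λ, …, λ^m)ᵀ. Then η_F^S(λ, x, P) = sqrt(2‖r‖₂² − |xᵀr|²) / ‖Λ_m‖₂ ≤ √2 · η(λ, x, P). Moreover, defining ΔA_j := (conj(λ^j)/‖Λ_m‖₂²)·(x̄ rᵀ + r x^H − (rᵀx) x̄ x^H) for j = 0,…,m, the polynomial ΔP(z) := Σ_{j=0}^m z^j ΔA_j is the unique symmetric polynomial in P_m(ℂ^{n×n}) satisfying P(λ)x + ΔP(λ)x = 0 and |||ΔP|||_F = η_F^S(λ,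 x, P). -/
/-!
Evaluation at `λ` is a linear map from coefficient tuples, with the Frobenius inner product,
onto matrices, and `(conj(λ^j)/‖Λ_m‖² • E)_j` is the least-norm preimage of `E`: its inner
product with any `ΔP` is `⟨E, ΔP(λ)⟩_F/‖Λ_m‖²`. Hence if `(P(λ) + E)x = 0` and `E` is orthogonal
to `ΔP(λ) - E` for every admissible `ΔP`, Pythagoras gives
`|||ΔP|||_F² = ‖E‖_F²/‖Λ_m‖² + |||ΔP - ΔA|||_F²` with `ΔA` that preimage, which yields both the
value of the backward error and the uniqueness of the minimizer. For symmetric `ΔP`,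
`F = ΔP(λ) - E` is symmetric with `Fx = 0`, so also `xᵀF = 0`, and each rank-one term of
`E = x̄rᵀ + rxᴴ − (rᵀx)x̄xᴴ` is orthogonal to `F`; without structure, `E = rxᴴ` does the same job.
-/

open scoped ComplexConjugate
open Matrix

noncomputable section

variable {ι : Type*} [Fintype ι] [DecidableEq ι]

/-- The class of symmetric matrix polynomials. -/
def SymPoly {ι : Type*} [Fintype ι] [DecidableEq ι] {m : ℕ} :
    Set (Fin (m+1) → Matrix ι ι ℂ) := {B | ∀ j, (B j)ᵀ = B j}

section FrobeniusInner

variable {κ : Type*} [Fintype κ]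

def frobInner (M N : Matrix κ κ ℂ) : ℂ := ∑ i, ∑ k, conj (M i k) * N i k

lemma frobInner_add_left (M N P : Matrix κ κ ℂ) :
    frobInner (M + N) P = frobInner M P + frobInner N P := by
  simp [frobInner, add_mul, Finset.sum_add_distrib]

lemma frobInner_add_right (M N P : Matrix κ κ ℂ) :
    frobInner M (N + P) = frobInner M N + frobInner M P := by
  simp [frobInner, mul_add, Finset.sum_add_distrib]

lemma frobInner_sub_left (M N P : Matrix κ κ ℂ) :
    frobInner (M - N) P = frobInner M P - frobInner N P := by
  simp [frobInner, sub_mul, Finset.sum_sub_distrib]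

lemma frobInner_sub_right (M N P : Matrix κ κ ℂ) :
    frobInner M (N - P) = frobInner M N - frobInner M P := by
  simp [frobInner, mul_sub, Finset.sum_sub_distrib]

lemma frobInner_smul_left (c : ℂ) (M N : Matrix κ κ ℂ) :
    frobInner (c • M) N = conj c * frobInner M N := by
  simp [frobInner, Finset.mul_sum, mul_assoc]

lemma frobInner_smul_right (c : ℂ) (M N : Matrix κ κ ℂ) :
    frobInner M (c • N) = c * frobInner M N := by
  simp [frobInner, Finset.mul_sum, mul_left_comm]

lemma frobInner_sum_right {γ : Type*} (s : Finset γ) (M : Matrix κ κ ℂ)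
    (N : γ → Matrix κ κ ℂ) :
    frobInner M (∑ j ∈ s, N j) = ∑ j ∈ s, frobInner M (N j) := by
  simp only [frobInner, Matrix.sum_apply, Finset.mul_sum]
  rw [Finset.sum_comm (s := s)]
  exact Finset.sum_congr rfl fun _ _ => Finset.sum_comm

lemma frobInner_vecMulVec_left (u v : κ → ℂ) (F : Matrix κ κ ℂ) :
    frobInner (vecMulVec u v) F = star u ⬝ᵥ (F *ᵥ star v) := by
  simp only [frobInner, vecMulVec_apply, dotProduct, mulVec, Pi.star_apply, RCLike.star_def,
    Finset.mul_sum, map_mul]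
  exact Finset.sum_congr rfl fun _ _ => Finset.sum_congr rfl fun _ _ => by ring

lemma frobInner_vecMulVec_vecMulVec (u v u' v' : κ → ℂ) :
    frobInner (vecMulVec u v) (vecMulVec u' v') = (star u ⬝ᵥ u') * (star v ⬝ᵥ v') := by
  simp only [frobInner, vecMulVec_apply, dotProduct, Pi.star_apply, RCLike.star_def,
    Finset.sum_mul_sum, map_mul]
  exact Finset.sum_congr rfl fun _ _ => Finset.sum_congr rfl fun _ _ => by ring

lemma ofReal_vecNormSq (u : κ → ℂ) : (vecNormSq u : ℂ) = star u ⬝ᵥ u := by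
  simp [vecNormSq, dotProduct, Complex.conj_mul']

lemma vecNormSq_star (u : κ → ℂ) : vecNormSq (star u) = vecNormSq u := by
  simp [vecNormSq]

lemma ofReal_frobNormSq (M : Matrix κ κ ℂ) : (frobNormSq M : ℂ) = frobInner M M := by
  simp [frobNormSq, frobInner, Complex.conj_mul']

lemma frobNormSq_add (M N : Matrix κ κ ℂ) :
    frobNormSq (M + N) = frobNormSq M + frobNormSq N + 2 * (frobInner M N).re := by
  simp only [frobNormSq, frobInner, Matrix.add_apply, Complex.re_sum, Finset.mul_sum,
    ← Finset.sum_add_distrib]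
  refine Finset.sum_congr rfl fun i _ => Finset.sum_congr rfl fun k _ => ?_
  simp only [Complex.sq_norm, Complex.normSq_apply, Complex.mul_re, Complex.add_re,
    Complex.add_im, Complex.conj_re, Complex.conj_im]
  ring

lemma frobNormSq_nonneg (M : Matrix κ κ ℂ) : 0 ≤ frobNormSq M := by
  unfold frobNormSq; positivity

lemma frobNormSq_eq_zero_iff {M : Matrix κ κ ℂ} : frobNormSq M = 0 ↔ M = 0 := by
  simp only [frobNormSq, ← Matrix.ext_iff, Matrix.zero_apply]
  rw [Finset.sum_eq_zero_iff_of_nonneg fun _ _ => by positivity]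
  simp [Finset.sum_eq_zero_iff_of_nonneg]

lemma frobNormSq_smul (c : ℂ) (M : Matrix κ κ ℂ) :
    frobNormSq (c • M) = ‖c‖ ^ 2 * frobNormSq M := by
  simp [frobNormSq, mul_pow, Finset.mul_sum]

lemma frobNormSq_vecMulVec (u v : κ → ℂ) :
    frobNormSq (vecMulVec u v) = vecNormSq u * vecNormSq v := by
  simp only [frobNormSq, vecNormSq, vecMulVec_apply, norm_mul, mul_pow, Finset.sum_mul_sum]

end FrobeniusInner

lemma lamNormSq_pos (m : ℕ) (lam : ℂ) : 0 < lamNormSq m lam := by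
  calc 0 < ‖lam ^ ((0 : Fin (m+1)) : ℕ)‖ ^ 2 := by simp
    _ ≤ lamNormSq m lam := Finset.single_le_sum (f := fun j : Fin (m+1) => ‖lam ^ (j : ℕ)‖ ^ 2)
        (fun _ _ => sq_nonneg _) (Finset.mem_univ 0)

section MinNormPreimage

variable {κ : Type*} {m : ℕ}

lemma polyEval_sub (B C : Fin (m+1) → Matrix κ κ ℂ) (z : ℂ) :
    polyEval (B - C) z = polyEval B z - polyEval C z := by
  simp [polyEval, smul_sub, Finset.sum_sub_distrib]

def minNormPreimage (m : ℕ) (lam : ℂ) (E : Matrix κ κ ℂ) : Fin (m+1) → Matrix κ κ ℂ :=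
  fun j => (conj (lam ^ (j : ℕ)) / (lamNormSq m lam : ℂ)) • E

lemma polyEval_minNormPreimage (lam : ℂ) (E : Matrix κ κ ℂ) :
    polyEval (minNormPreimage m lam E) lam = E := by
  have hL : (lamNormSq m lam : ℂ) ≠ 0 := mod_cast (lamNormSq_pos m lam).ne'
  have hsum : ∑ j : Fin (m+1), lam ^ (j : ℕ) * conj (lam ^ (j : ℕ)) = lamNormSq m lam := by
    simp only [lamNormSq, Complex.ofReal_sum, Complex.ofReal_pow, Complex.mul_conj']
  simp only [polyEval, minNormPreimage, smul_smul, ← Finset.sum_smul, mul_div_assoc',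
    ← Finset.sum_div, hsum, div_self hL, one_smul]

lemma sum_frobNormSq_minNormPreimage [Fintype κ] (lam : ℂ) (E : Matrix κ κ ℂ) :
    ∑ j, frobNormSq (minNormPreimage m lam E j) = frobNormSq E / lamNormSq m lam := by
  have hL := (lamNormSq_pos m lam).ne'
  simp only [minNormPreimage, frobNormSq_smul, norm_div, RCLike.norm_conj, Complex.norm_real,
    Real.norm_eq_abs, div_pow, sq_abs, ← Finset.sum_mul, ← Finset.sum_div]
  rw [show ∑ j : Fin (m+1), ‖lam ^ (j : ℕ)‖ ^ 2 = lamNormSq m lam from rfl]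
  field_simp

lemma polyNormF_minNormPreimage [Fintype κ] (lam : ℂ) (E : Matrix κ κ ℂ) :
    polyNormF (minNormPreimage m lam E) = Real.sqrt (frobNormSq E / lamNormSq m lam) :=
  congrArg Real.sqrt (sum_frobNormSq_minNormPreimage lam E)

lemma sum_frobInner_minNormPreimage [Fintype κ] (lam : ℂ) (E : Matrix κ κ ℂ)
    (C : Fin (m+1) → Matrix κ κ ℂ) :
    ∑ j, frobInner (minNormPreimage m lam E j) (C j)
      = frobInner E (polyEval C lam) / lamNormSq m lam := by
  simp only [minNormPreimage, frobInner_smul_left, polyEval, frobInner_sum_right,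
    frobInner_smul_right, map_div₀, Complex.conj_conj, Complex.conj_ofReal, Finset.sum_div]
  exact Finset.sum_congr rfl fun _ _ => by ring

lemma sum_frobNormSq_eq_of_frobInner_eq_zero [Fintype κ] (lam : ℂ) (E : Matrix κ κ ℂ)
    (B : Fin (m+1) → Matrix κ κ ℂ) (hB : frobInner E (polyEval B lam - E) = 0) :
    ∑ j, frobNormSq (B j) = ∑ j, frobNormSq (minNormPreimage m lam E j)
      + ∑ j, frobNormSq (B j - minNormPreimage m lam E j) := by
  have hcross : ∑ j, (frobInner (minNormPreimage m lam E j)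
      (B j - minNormPreimage m lam E j)).re = 0 := by
    have h := sum_frobInner_minNormPreimage lam E (B - minNormPreimage m lam E)
    rw [polyEval_sub, polyEval_minNormPreimage, hB, zero_div] at h
    rw [← Complex.re_sum]
    exact (congrArg Complex.re h).trans Complex.zero_re
  calc ∑ j, frobNormSq (B j)
      = ∑ j, frobNormSq (minNormPreimage m lam E j + (B j - minNormPreimage m lam E j)) := by
        simp
    _ = _ := by
        simp only [frobNormSq_add, Finset.sum_add_distrib, ← Finset.mul_sum, hcross, mul_zero,
          add_zero]

end MinNormPreimage

section Minimality

variable {κ : Type*} [Fintype κ] {m : ℕ} {S : Set (Fin (m+1) → Matrix κ κ ℂ)} {lam : ℂ}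
  {x : κ → ℂ} {A : Fin (m+1) → Matrix κ κ ℂ} {E : Matrix κ κ ℂ}

lemma sub_mulVec_eq_zero_of_add_mulVec_eq_zero {P B C : Matrix κ κ ℂ}
    (hB : (P + B) *ᵥ x = 0) (hC : (P + C) *ᵥ x = 0) : (B - C) *ᵥ x = 0 := by
  rw [show B - C = (P + B) - (P + C) by abel, sub_mulVec, hB, hC, sub_self]

lemma add_mulVec_eq_zero_of_mulVec_eq {P : Matrix κ κ ℂ} {r : κ → ℂ} (hr : r = -(P *ᵥ x))
    (hE : E *ᵥ x = r) : (P + E) *ᵥ x = 0 := by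
  rw [add_mulVec, hE, hr, add_neg_cancel]

lemma isLeast_polyNormF_minNormPreimage (hS : minNormPreimage m lam E ∈ S)
    (hE : (polyEval A lam + E) *ᵥ x = 0)
    (horth : ∀ B ∈ S, (polyEval A lam + polyEval B lam) *ᵥ x = 0 →
      frobInner E (polyEval B lam - E) = 0) :
    IsLeast {t | ∃ B ∈ S, (polyEval A lam + polyEval B lam) *ᵥ x = 0 ∧ t = polyNormF B}
      (polyNormF (minNormPreimage m lam E)) := by
  refine ⟨⟨_, hS, by rwa [polyEval_minNormPreimage], rfl⟩, ?_⟩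
  rintro _ ⟨B, hBS, hB, rfl⟩
  apply Real.sqrt_le_sqrt
  rw [sum_frobNormSq_eq_of_frobInner_eq_zero lam E B (horth B hBS hB)]
  exact le_add_of_nonneg_right (Finset.sum_nonneg fun _ _ => frobNormSq_nonneg _)

lemma eta_eq_polyNormF_minNormPreimage (hS : minNormPreimage m lam E ∈ S)
    (hE : (polyEval A lam + E) *ᵥ x = 0)
    (horth : ∀ B ∈ S, (polyEval A lam + polyEval B lam) *ᵥ x = 0 →
      frobInner E (polyEval B lam - E) = 0) :
    eta polyNormF S lam x A = polyNormF (minNormPreimage m lam E) :=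
  (isLeast_polyNormF_minNormPreimage hS hE horth).csInf_eq

lemma eq_minNormPreimage_of_polyNormF_eq
    (horth : ∀ B ∈ S, (polyEval A lam + polyEval B lam) *ᵥ x = 0 →
      frobInner E (polyEval B lam - E) = 0)
    {B : Fin (m+1) → Matrix κ κ ℂ} (hBS : B ∈ S)
    (hB : (polyEval A lam + polyEval B lam) *ᵥ x = 0)
    (hnorm : polyNormF B = polyNormF (minNormPreimage m lam E)) :
    B = minNormPreimage m lam E := by
  have hsplit := sum_frobNormSq_eq_of_frobInner_eq_zero lam E B (horth B hBS hB)
  have hsq : ∑ j, frobNormSq (B j) = ∑ j, frobNormSq (minNormPreimage m lam E j) :=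
    (Real.sqrt_inj (Finset.sum_nonneg fun _ _ => frobNormSq_nonneg _)
      (Finset.sum_nonneg fun _ _ => frobNormSq_nonneg _)).mp hnorm
  have hzero : ∑ j, frobNormSq (B j - minNormPreimage m lam E j) = 0 := by linarith
  funext j
  rw [← sub_eq_zero, ← frobNormSq_eq_zero_iff]
  exact (Finset.sum_eq_zero_iff_of_nonneg fun _ _ => frobNormSq_nonneg _).mp hzero j
    (Finset.mem_univ j)

lemma eta_polyNormF_univ {r : κ → ℂ} (hx : star x ⬝ᵥ x = 1)
    (hr : r = -(polyEval A lam *ᵥ x)) :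
    eta polyNormF Set.univ lam x A = Real.sqrt (vecNormSq r / lamNormSq m lam) := by
  have hE : vecMulVec r (star x) *ᵥ x = r := by
    simp [vecMulVec_mulVec, hx]
  have horth : ∀ B ∈ (Set.univ : Set (Fin (m+1) → Matrix κ κ ℂ)),
      (polyEval A lam + polyEval B lam) *ᵥ x = 0 →
      frobInner (vecMulVec r (star x)) (polyEval B lam - vecMulVec r (star x)) = 0 := by
    intro B _ hB
    rw [frobInner_vecMulVec_left, star_star,
      sub_mulVec_eq_zero_of_add_mulVec_eq_zero hB (add_mulVec_eq_zero_of_mulVec_eq hr hE),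
      dotProduct_zero]
  have hxx : vecNormSq x = 1 := by exact_mod_cast (ofReal_vecNormSq x).trans hx
  rw [eta_eq_polyNormF_minNormPreimage (Set.mem_univ _) (add_mulVec_eq_zero_of_mulVec_eq hr hE)
    horth, polyNormF_minNormPreimage, frobNormSq_vecMulVec, vecNormSq_star, hxx, mul_one]

end Minimality

section Symmetric

variable {κ : Type*} [Fintype κ]

/-- For `xᴴx = 1`, the symmetric matrix of least Frobenius norm with `E x = r`. -/
def symMinNormSolution (x r : κ → ℂ) : Matrix κ κ ℂ :=
  vecMulVec (star x) r + vecMulVec r (star x) - (r ⬝ᵥ x) • vecMulVec (star x) (star x)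

lemma transpose_symMinNormSolution (x r : κ → ℂ) :
    (symMinNormSolution x r)ᵀ = symMinNormSolution x r := by
  simp [symMinNormSolution, add_comm]

lemma symMinNormSolution_mulVec {x : κ → ℂ} (r : κ → ℂ) (hx : star x ⬝ᵥ x = 1) :
    symMinNormSolution x r *ᵥ x = r := by
  simp [symMinNormSolution, sub_mulVec, add_mulVec, smul_mulVec, vecMulVec_mulVec, hx]

lemma frobInner_symMinNormSolution_eq_zero (x r : κ → ℂ) {F : Matrix κ κ ℂ} (hF : Fᵀ = F)
    (hFx : F *ᵥ x = 0) : frobInner (symMinNormSolution x r) F = 0 := by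
  have hxF : ∀ w, x ⬝ᵥ (F *ᵥ w) = 0 := fun w => by
    rw [dotProduct_mulVec, ← hF, vecMul_transpose, hFx, zero_dotProduct]
  simp [symMinNormSolution, frobInner_sub_left, frobInner_add_left, frobInner_smul_left,
    frobInner_vecMulVec_left, hxF, hFx]

lemma frobNormSq_symMinNormSolution {x : κ → ℂ} (r : κ → ℂ) (hx : star x ⬝ᵥ x = 1) :
    frobNormSq (symMinNormSolution x r) = 2 * vecNormSq r - ‖x ⬝ᵥ r‖ ^ 2 := by
  have hxx : x ⬝ᵥ star x = 1 := by rw [dotProduct_comm, hx]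
  apply Complex.ofReal_injective
  simp only [ofReal_frobNormSq, symMinNormSolution, frobInner_sub_left, frobInner_sub_right,
    frobInner_add_left, frobInner_add_right, frobInner_smul_left, frobInner_smul_right,
    frobInner_vecMulVec_vecMulVec, star_star, star_dotProduct_star]
  push_cast
  rw [ofReal_vecNormSq, ← Complex.mul_conj', hxx, dotProduct_comm r x, Complex.star_def]
  ring

lemma transpose_polyEval_of_mem_symPoly [DecidableEq κ] {m : ℕ}
    {B : Fin (m+1) → Matrix κ κ ℂ} (hB : B ∈ SymPoly) (z : ℂ) :
    (polyEval B z)ᵀ = polyEval B z := by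
  simp only [polyEval, transpose_sum, transpose_smul, hB _]

lemma minNormPreimage_mem_symPoly [DecidableEq κ] {m : ℕ} (lam : ℂ) {E : Matrix κ κ ℂ}
    (hE : Eᵀ = E) : minNormPreimage m lam E ∈ SymPoly :=
  fun _ => by rw [minNormPreimage, transpose_smul, hE]

end Symmetric

theorem symmetric_backward_error_frobenius_general {n m : ℕ}
    (A : Fin (m+1) → Matrix (Fin n) (Fin n) ℂ)
    (lam : ℂ) (x : Fin n → ℂ) (hx : star x ⬝ᵥ x = 1)
    (r : Fin n → ℂ) (hr : r = -(polyEval A lam *ᵥ x))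
    (ΔA : Fin (m+1) → Matrix (Fin n) (Fin n) ℂ)
    (hΔ : ∀ j : Fin (m+1),
      ΔA j = (conj (lam ^ (j : ℕ)) / (lamNormSq m lam : ℂ)) •
        (vecMulVec (star x) r + vecMulVec r (star x)
          - (r ⬝ᵥ x) • vecMulVec (star x) (star x))) :
    eta polyNormF SymPoly lam x A
      = Real.sqrt (2 * vecNormSq r - ‖x ⬝ᵥ r‖ ^ 2) / Real.sqrt (lamNormSq m lam) ∧
    eta polyNormF SymPoly lam x A ≤ Real.sqrt 2 * eta polyNormF Set.univ lam x A ∧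
    ΔA ∈ SymPoly ∧
    (polyEval A lam + polyEval ΔA lam) *ᵥ x = 0 ∧
    polyNormF ΔA = eta polyNormF SymPoly lam x A ∧
    (∀ ΔB ∈ SymPoly, (polyEval A lam + polyEval ΔB lam) *ᵥ x = 0 →
      polyNormF ΔB = eta polyNormF SymPoly lam x A → ΔB = ΔA) := by
  obtain rfl : ΔA = minNormPreimage m lam (symMinNormSolution x r) := funext hΔ
  set E := symMinNormSolution x r
  have hS : minNormPreimage m lam E ∈ SymPoly :=
    minNormPreimage_mem_symPoly lam (transpose_symMinNormSolution x r)
  have hE : (polyEval A lam + E) *ᵥ x = 0 :=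
    add_mulVec_eq_zero_of_mulVec_eq hr (symMinNormSolution_mulVec r hx)
  have horth : ∀ B : Fin (m+1) → Matrix (Fin n) (Fin n) ℂ, B ∈ SymPoly →
      (polyEval A lam + polyEval B lam) *ᵥ x = 0 →
      frobInner E (polyEval B lam - E) = 0 := fun B hBS hB =>
    frobInner_symMinNormSolution_eq_zero x r
      (by rw [transpose_sub, transpose_polyEval_of_mem_symPoly hBS, transpose_symMinNormSolution])
      (sub_mulVec_eq_zero_of_add_mulVec_eq_zero hB hE)
  have heta := eta_eq_polyNormF_minNormPreimage hS hE horth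
  have hval : polyNormF (minNormPreimage m lam E)
      = Real.sqrt ((2 * vecNormSq r - ‖x ⬝ᵥ r‖ ^ 2) / lamNormSq m lam) := by
    rw [polyNormF_minNormPreimage, frobNormSq_symMinNormSolution r hx]
  refine ⟨by rw [heta, hval, Real.sqrt_div' _ (lamNormSq_pos m lam).le],
    ?_, hS, by rwa [polyEval_minNormPreimage], heta.symm, fun B hBS hB hnorm =>
      eq_minNormPreimage_of_polyNormF_eq horth hBS hB (hnorm.trans heta)⟩
  rw [heta, hval, eta_polyNormF_univ hx hr, ← Real.sqrt_mul zero_le_two, mul_div_assoc']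
  gcongr
  · exact (lamNormSq_pos m lam).le
  · exact sub_le_self _ (sq_nonneg ‖x ⬝ᵥ r‖)

/-- Structured backward error of an approximate eigenpair of a symmetric
matrix polynomial, Frobenius norm: explicit formula, bound by `√2·η`, and the unique
minimal symmetric perturbation. -/
theorem symmetric_backward_error_frobenius {n m : ℕ}
    (A : Fin (m+1) → Matrix (Fin n) (Fin n) ℂ)
    (hA : A ∈ SymPoly) (hreg : Regular A)
    (lam : ℂ) (x : Fin n → ℂ) (hx : star x ⬝ᵥ x = 1)
    (r : Fin n → ℂ) (hr : r = -(polyEval A lam *ᵥ x))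
    (ΔA : Fin (m+1) → Matrix (Fin n) (Fin n) ℂ)
    (hΔ : ∀ j : Fin (m+1),
      ΔA j = (conj (lam ^ (j : ℕ)) / (lamNormSq m lam : ℂ)) •
        (vecMulVec (star x) r + vecMulVec r (star x)
          - (r ⬝ᵥ x) • vecMulVec (star x) (star x))) :
    eta polyNormF SymPoly lam x A
      = Real.sqrt (2 * vecNormSq r - ‖x ⬝ᵥ r‖ ^ 2) / Real.sqrt (lamNormSq m lam) ∧
    eta polyNormF SymPoly lam x A ≤ Real.sqrt 2 * eta polyNormF Set.univ lam x A ∧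
    ΔA ∈ SymPoly ∧
    (polyEval A lam + polyEval ΔA lam) *ᵥ x = 0 ∧
    polyNormF ΔA = eta polyNormF SymPoly lam x A ∧
    (∀ ΔB ∈ SymPoly, (polyEval A lam + polyEval ΔB lam) *ᵥ x = 0 →
      polyNormF ΔB = eta polyNormF SymPoly lam x A → ΔB = ΔA) :=
  symmetric_backward_error_frobenius_general A lam x hx r hr ΔA hΔ
end
end
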